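/- Let (Ω, 𝓕, ℙ) be a standard Borel probability space, let X : Ω → ℝ be integrable, let A, Z : Ω → {0,1} be measurable with ℙ(Z = 1, A = 0) > 0 and ℙ(Z = 0, A = 0) > 0, and let Y, Y₀ : Ω → ℝ be integrable with Y = Y₀ almost surely on {A = 0} (consistency). Assume: (i) Y₀ is conditionally independent of A given σ(X); (ii) E[Y₀ | σ(X)] = α + β·X almost surely for real constants α, β; and (iii) under the conditional measure ℙ[· | A = 0], Y₀ is conditionally independent of Z given σ(X). Then E[Y | Z = 1, A = 0] − E[Y | Z = 0, A = 0] = β·(E[X | Z = 1, A = 0] − E[X | Z = 0, A = 0]). (This is the paper's Supplemental Appendix S1.4 expression for the confounding bias B₂ of the unadjusted contrast in the observed outcome across negative control exposure groups within the unexposed: it equals the slope β times the covariate mean difference D₂ across negative control exposure groups among the unexposed.) -/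

import Mathlib

/-!
If `f ⊥⊥ g | m`, then adjoining `σ(f)` to `m` does not change the conditional probability of an
event `{g ∈ t}`; by the tower property and pulling out,
`E[f · 1{g ∈ t} | m] = E[f | m] · ℙ(g ∈ t | m)`, so on `{g ∈ t}` the variable `f` may be
replaced by `E[f | m]` inside integrals over `m`-sets.
With `f = Y₀`, `m = σ(X)` and `g = A` this shows that the linear model `E[Y₀ | X] = α + β X`
still holds under `ℙ[· | A = 0]`; with `g = Z` under `ℙ[· | A = 0]`, together with consistency,
it gives `E[Y; Z = z, A = 0] = α ℙ(Z = z, A = 0) + β E[X; Z = z, A = 0]`, and `α` cancels in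
the contrast.
-/

open MeasureTheory ProbabilityTheory MeasurableSpace

lemma Set.indicator_eq_mul_indicator_one {ι M₀ : Type*} [MulZeroOneClass M₀] (s : Set ι)
    (f : ι → M₀) : s.indicator f = f * s.indicator 1 := by
  funext i
  by_cases hi : i ∈ s <;> simp [hi]

section CondMeasure

variable {Ω : Type*} {mΩ : MeasurableSpace Ω} {μ : Measure Ω} {s t : Set Ω}

lemma MeasureTheory.Integrable.cond {f : Ω → ℝ} (hf : Integrable f μ) :
    Integrable f μ[|s] := by
  by_cases hs : μ s = 0
  · rw [cond_eq_zero_of_meas_eq_zero hs]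
    exact integrable_zero_measure
  · exact hf.restrict.smul_measure (ENNReal.inv_ne_top.mpr hs)

lemma setIntegral_cond (ht : MeasurableSet t) (f : Ω → ℝ) :
    ∫ ω in t, f ω ∂μ[|s] = (μ s).toReal⁻¹ * ∫ ω in t ∩ s, f ω ∂μ := by
  rw [ProbabilityTheory.cond, Measure.restrict_smul, integral_smul_measure,
    Measure.restrict_restrict ht, ENNReal.toReal_inv, smul_eq_mul]

lemma setIntegral_inter_eq_of_setIntegral_cond_eq [IsFiniteMeasure μ] (hs : μ s ≠ 0)
    (ht : MeasurableSet t) {f g : Ω → ℝ}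
    (h : ∫ ω in t, f ω ∂μ[|s] = ∫ ω in t, g ω ∂μ[|s]) :
    ∫ ω in t ∩ s, f ω ∂μ = ∫ ω in t ∩ s, g ω ∂μ := by
  rw [setIntegral_cond ht, setIntegral_cond ht] at h
  exact mul_left_cancel₀ (inv_ne_zero (ENNReal.toReal_ne_zero.mpr ⟨hs, measure_ne_top μ s⟩)) h

lemma setIntegral_const_add_const_mul [IsFiniteMeasure μ] (a b : ℝ) {f : Ω → ℝ}
    (hf : Integrable f μ) :
    ∫ ω in s, a + b * f ω ∂μ = a * (μ s).toReal + b * ∫ ω in s, f ω ∂μ := by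
  rw [integral_add (integrable_const a).integrableOn (hf.const_mul b).integrableOn,
    setIntegral_const, integral_const_mul, smul_eq_mul, measureReal_def, mul_comm]

end CondMeasure

section PiSystem

variable {Ω : Type*}

lemma isPiSystem_image2_inter (m₁ m₂ : MeasurableSpace Ω) :
    IsPiSystem (Set.image2 (· ∩ ·) {s | MeasurableSet[m₁] s} {s | MeasurableSet[m₂] s}) := by
  rintro _ ⟨s₁, hs₁, s₂, hs₂, rfl⟩ _ ⟨t₁, ht₁, t₂, ht₂, rfl⟩ -
  exact ⟨s₁ ∩ t₁, hs₁.inter ht₁, s₂ ∩ t₂, hs₂.inter ht₂, Set.inter_inter_inter_comm _ _ _ _⟩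

lemma sup_eq_generateFrom_image2_inter (m₁ m₂ : MeasurableSpace Ω) :
    m₁ ⊔ m₂ =
      generateFrom (Set.image2 (· ∩ ·) {s | MeasurableSet[m₁] s} {s | MeasurableSet[m₂] s}) := by
  refine le_antisymm (sup_le ?_ ?_) (generateFrom_le ?_)
  · exact fun s hs => measurableSet_generateFrom ⟨s, hs, Set.univ, .univ, Set.inter_univ s⟩
  · exact fun s hs => measurableSet_generateFrom ⟨Set.univ, .univ, s, hs, Set.univ_inter s⟩
  · rintro _ ⟨s₁, hs₁, s₂, hs₂, rfl⟩
    exact (le_sup_left (b := m₂) _ hs₁).inter (le_sup_right (a := m₁) _ hs₂)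

end PiSystem

section CondExp

variable {Ω : Type*} {m m₁ m₂ mΩ : MeasurableSpace Ω} {μ : Measure Ω}

lemma setIntegral_eq_setIntegral_of_isPiSystem (hm : m ≤ mΩ) {C : Set (Set Ω)}
    (hgen : m = generateFrom C) (hC : IsPiSystem C) (huniv : Set.univ ∈ C) {f g : Ω → ℝ}
    (hf : Integrable f μ) (hg : Integrable g μ)
    (hbasic : ∀ s ∈ C, ∫ ω in s, f ω ∂μ = ∫ ω in s, g ω ∂μ) {s : Set Ω}
    (hs : MeasurableSet[m] s) : ∫ ω in s, f ω ∂μ = ∫ ω in s, g ω ∂μ := by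
  induction s, hs using induction_on_inter hgen hC with
  | empty => simp
  | basic s hs => exact hbasic s hs
  | compl s hs ih =>
    have hint : ∫ ω, f ω ∂μ = ∫ ω, g ω ∂μ := by simpa using hbasic _ huniv
    rw [setIntegral_compl (hm s hs) hf, setIntegral_compl (hm s hs) hg, hint, ih]
  | iUnion s hdisj hs ih =>
    rw [integral_iUnion (fun i => hm _ (hs i)) hdisj hf.integrableOn,
      integral_iUnion (fun i => hm _ (hs i)) hdisj hg.integrableOn]
    exact tsum_congr ih

lemma condExp_indicator_eq_mul_of_stronglyMeasurable [IsFiniteMeasure μ] {f : Ω → ℝ}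
    (hf : StronglyMeasurable[m] f) (hfi : Integrable f μ) {t : Set Ω} (ht : MeasurableSet t) :
    μ[t.indicator f | m] =ᵐ[μ] f * μ⟦t | m⟧ := by
  rw [t.indicator_eq_mul_indicator_one f]
  exact condExp_mul_of_stronglyMeasurable_left hf
    (t.indicator_eq_mul_indicator_one f ▸ hfi.indicator ht) ((integrable_const 1).indicator ht)

variable [StandardBorelSpace Ω] [IsFiniteMeasure μ] {hm : m ≤ mΩ}

lemma ProbabilityTheory.CondIndep.condExp_indicator_sup_eq (h : CondIndep m m₁ m₂ hm μ)
    (hm₁ : m₁ ≤ mΩ) (hm₂ : m₂ ≤ mΩ) {t : Set Ω} (ht : MeasurableSet[m₂] t) :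
    μ⟦t | m ⊔ m₁⟧ =ᵐ[μ] μ⟦t | m⟧ := by
  have hsup : m ⊔ m₁ ≤ mΩ := sup_le hm hm₁
  have hti : Integrable (t.indicator (1 : Ω → ℝ)) μ := (integrable_const 1).indicator (hm₂ t ht)
  refine (ae_eq_condExp_of_forall_setIntegral_eq hsup hti
    (fun s _ _ => integrable_condExp.integrableOn) (fun s hs _ => ?_)
    (stronglyMeasurable_condExp.aestronglyMeasurable.mono le_sup_left)).symm
  refine setIntegral_eq_setIntegral_of_isPiSystem hsup (sup_eq_generateFrom_image2_inter m m₁)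
    (isPiSystem_image2_inter m m₁) ⟨.univ, .univ, .univ, .univ, Set.inter_univ _⟩
    integrable_condExp hti ?_ hs
  rintro _ ⟨s₁, hs₁, s₂, hs₂, rfl⟩
  have hs₂' : MeasurableSet s₂ := hm₁ s₂ hs₂
  have hind := (condIndep_iff m m₁ m₂ hm hm₁ hm₂ μ).mp h s₂ t hs₂ ht
  calc ∫ ω in s₁ ∩ s₂, (μ⟦t | m⟧) ω ∂μ
      = ∫ ω in s₁, s₂.indicator (μ⟦t | m⟧) ω ∂μ := (setIntegral_indicator hs₂').symm
    _ = ∫ ω in s₁, μ[s₂.indicator (μ⟦t | m⟧) | m] ω ∂μ :=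
      (setIntegral_condExp hm (integrable_condExp.indicator hs₂') hs₁).symm
    _ = ∫ ω in s₁, (μ⟦s₂ ∩ t | m⟧) ω ∂μ := by
      refine integral_congr_ae (ae_restrict_of_ae ?_)
      refine (condExp_indicator_eq_mul_of_stronglyMeasurable stronglyMeasurable_condExp
        integrable_condExp hs₂').trans ?_
      rw [mul_comm]
      exact hind.symm
    _ = ∫ ω in s₁, (s₂ ∩ t).indicator 1 ω ∂μ :=
      setIntegral_condExp hm ((integrable_const 1).indicator (hs₂'.inter (hm₂ t ht))) hs₁
    _ = ∫ ω in s₁ ∩ s₂, t.indicator 1 ω ∂μ := by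
      rw [setIntegral_indicator (hs₂'.inter (hm₂ t ht)), setIntegral_indicator (hm₂ t ht),
        Set.inter_assoc]

lemma ProbabilityTheory.CondIndep.condExp_indicator_eq_mul (h : CondIndep m m₁ m₂ hm μ)
    (hm₁ : m₁ ≤ mΩ) (hm₂ : m₂ ≤ mΩ) {f : Ω → ℝ} (hf : StronglyMeasurable[m₁] f)
    (hfi : Integrable f μ) {t : Set Ω} (ht : MeasurableSet[m₂] t) :
    μ[t.indicator f | m] =ᵐ[μ] μ[f | m] * μ⟦t | m⟧ := by
  have hsup : m ⊔ m₁ ≤ mΩ := sup_le hm hm₁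
  have hinner : μ[t.indicator f | m ⊔ m₁] =ᵐ[μ] f * μ⟦t | m⟧ :=
    (condExp_indicator_eq_mul_of_stronglyMeasurable (hf.mono (le_sup_right : m₁ ≤ m ⊔ m₁)) hfi
      (hm₂ t ht)).trans (h.condExp_indicator_sup_eq hm₁ hm₂ ht).mul_left
  calc μ[t.indicator f | m]
      =ᵐ[μ] μ[μ[t.indicator f | m ⊔ m₁] | m] := (condExp_condExp_of_le le_sup_left hsup).symm
    _ =ᵐ[μ] μ[f * μ⟦t | m⟧ | m] := condExp_congr_ae hinner
    _ =ᵐ[μ] μ[f | m] * μ⟦t | m⟧ :=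
      condExp_mul_of_stronglyMeasurable_right stronglyMeasurable_condExp
        (integrable_condExp.congr hinner) hfi

lemma ProbabilityTheory.CondIndep.setIntegral_inter_eq_setIntegral_condExp
    (h : CondIndep m m₁ m₂ hm μ) (hm₁ : m₁ ≤ mΩ) (hm₂ : m₂ ≤ mΩ) {f : Ω → ℝ}
    (hf : StronglyMeasurable[m₁] f) (hfi : Integrable f μ) {t : Set Ω} (ht : MeasurableSet[m₂] t)
    {s : Set Ω} (hs : MeasurableSet[m] s) :
    ∫ ω in s ∩ t, f ω ∂μ = ∫ ω in s ∩ t, μ[f | m] ω ∂μ := by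
  have ht' : MeasurableSet t := hm₂ t ht
  calc ∫ ω in s ∩ t, f ω ∂μ = ∫ ω in s, t.indicator f ω ∂μ := (setIntegral_indicator ht').symm
    _ = ∫ ω in s, μ[t.indicator f | m] ω ∂μ := (setIntegral_condExp hm (hfi.indicator ht') hs).symm
    _ = ∫ ω in s, μ[t.indicator μ[f | m] | m] ω ∂μ :=
      integral_congr_ae <| ae_restrict_of_ae <|
        (h.condExp_indicator_eq_mul hm₁ hm₂ hf hfi ht).trans
          (condExp_indicator_eq_mul_of_stronglyMeasurable stronglyMeasurable_condExp
            integrable_condExp ht').symm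
    _ = ∫ ω in s, t.indicator μ[f | m] ω ∂μ :=
      setIntegral_condExp hm (integrable_condExp.indicator ht') hs
    _ = ∫ ω in s ∩ t, μ[f | m] ω ∂μ := setIntegral_indicator ht'

section CondIndepFun

variable {β : Type*} [MeasurableSpace β] {f : Ω → ℝ} {g : Ω → β}

lemma ProbabilityTheory.CondIndepFun.setIntegral_inter_preimage_eq_setIntegral_condExp
    (h : CondIndepFun m hm f g μ) (hf : Measurable f) (hg : Measurable g) (hfi : Integrable f μ)
    {t : Set β} (ht : MeasurableSet t) {s : Set Ω} (hs : MeasurableSet[m] s) :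
    ∫ ω in s ∩ g ⁻¹' t, f ω ∂μ = ∫ ω in s ∩ g ⁻¹' t, μ[f | m] ω ∂μ :=
  ((condIndepFun_iff_condIndep m hm f g μ).mp h).setIntegral_inter_eq_setIntegral_condExp
    hf.comap_le hg.comap_le (comap_measurable f).stronglyMeasurable hfi ⟨t, ht, rfl⟩ hs

lemma ProbabilityTheory.CondIndepFun.condExp_cond_preimage (h : CondIndepFun m hm f g μ)
    (hf : Measurable f) (hg : Measurable g) (hfi : Integrable f μ) {t : Set β}
    (ht : MeasurableSet t) :
    μ[|g ⁻¹' t][f | m] =ᵐ[μ[|g ⁻¹' t]] μ[f | m] := by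
  refine (ae_eq_condExp_of_forall_setIntegral_eq hm hfi.cond
    (fun s _ _ => integrable_condExp.cond.integrableOn) (fun s hs _ => ?_)
    stronglyMeasurable_condExp.aestronglyMeasurable).symm
  rw [setIntegral_cond (hm s hs), setIntegral_cond (hm s hs),
    h.setIntegral_inter_preimage_eq_setIntegral_condExp hf hg hfi ht hs]

end CondIndepFun

end CondExp

theorem bias_formula_negative_control_general {Ω : Type*} [mΩ : MeasurableSpace Ω]
    [StandardBorelSpace Ω]
    (μ : Measure Ω) [IsProbabilityMeasure μ]
    (X : Ω → ℝ) (A Z : Ω → ℝ) (Y Y₀ : Ω → ℝ)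
    (hX : Measurable X) (hA : Measurable A) (hZ : Measurable Z)
    (hY₀ : Measurable Y₀)
    (hXint : Integrable X μ) (hY₀int : Integrable Y₀ μ)
    (hZ1A0 : 0 < μ {ω | Z ω = 1 ∧ A ω = 0}) (hZ0A0 : 0 < μ {ω | Z ω = 0 ∧ A ω = 0})
    (hcons : ∀ᵐ ω ∂μ, A ω = 0 → Y ω = Y₀ ω)
    (hPE : CondIndepFun (MeasurableSpace.comap X inferInstance) hX.comap_le Y₀ A μ)
    (α β : ℝ)
    (hlin : μ[Y₀ | MeasurableSpace.comap X inferInstance] =ᵐ[μ] fun ω => α + β * X ω)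
    (hNC : CondIndepFun (MeasurableSpace.comap X inferInstance) hX.comap_le Y₀ Z
      (μ[|{ω | A ω = 0}])) :
    (∫ ω in {ω | Z ω = 1 ∧ A ω = 0}, Y ω ∂μ) / (μ {ω | Z ω = 1 ∧ A ω = 0}).toReal
      - (∫ ω in {ω | Z ω = 0 ∧ A ω = 0}, Y ω ∂μ) / (μ {ω | Z ω = 0 ∧ A ω = 0}).toReal
    = β * ((∫ ω in {ω | Z ω = 1 ∧ A ω = 0}, X ω ∂μ) / (μ {ω | Z ω = 1 ∧ A ω = 0}).toReal
      - (∫ ω in {ω | Z ω = 0 ∧ A ω = 0}, X ω ∂μ) / (μ {ω | Z ω = 0 ∧ A ω = 0}).toReal) := by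
  set A₀ : Set Ω := {ω | A ω = 0}
  have hA₀ : MeasurableSet A₀ := hA (measurableSet_singleton 0)
  have hμA₀ : μ A₀ ≠ 0 := (hZ1A0.trans_le (measure_mono fun ω hω => hω.2)).ne'
  have hlin₀ : (μ[|A₀])[Y₀ | MeasurableSpace.comap X inferInstance] =ᵐ[μ[|A₀]]
      fun ω => α + β * X ω :=
    (hPE.condExp_cond_preimage hY₀ hA hY₀int (measurableSet_singleton 0)).trans
      (cond_absolutelyContinuous.ae_eq hlin)
  have harm : ∀ z : ℝ, ∫ ω in {ω | Z ω = z ∧ A ω = 0}, Y ω ∂μ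
      = α * (μ {ω | Z ω = z ∧ A ω = 0}).toReal + β * ∫ ω in {ω | Z ω = z ∧ A ω = 0}, X ω ∂μ := by
    intro z
    have hZz : MeasurableSet (Z ⁻¹' {z}) := hZ (measurableSet_singleton z)
    calc ∫ ω in {ω | Z ω = z ∧ A ω = 0}, Y ω ∂μ
        = ∫ ω in Z ⁻¹' {z} ∩ A₀, Y₀ ω ∂μ :=
          setIntegral_congr_ae (hZz.inter hA₀) <| by
            filter_upwards [hcons] with ω hω hωS using hω hωS.2
      _ = ∫ ω in Z ⁻¹' {z} ∩ A₀, α + β * X ω ∂μ := by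
          refine setIntegral_inter_eq_of_setIntegral_cond_eq hμA₀ hZz ?_
          simpa only [Set.univ_inter] using
            (hNC.setIntegral_inter_preimage_eq_setIntegral_condExp hY₀ hZ hY₀int.cond
              (measurableSet_singleton z) .univ).trans (integral_congr_ae (ae_restrict_of_ae hlin₀))
      _ = _ := setIntegral_const_add_const_mul α β hXint
  rw [harm 1, harm 0]
  field_simp [ENNReal.toReal_ne_zero.mpr ⟨hZ1A0.ne', measure_ne_top _ _⟩,
    ENNReal.toReal_ne_zero.mpr ⟨hZ0A0.ne', measure_ne_top _ _⟩]
  ring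

/-- The confounding bias of the unadjusted contrast in the observed outcome across negative
control exposure groups within the unexposed equals the slope `β` times the covariate mean
difference across negative control exposure groups among the unexposed:
`E[Y|Z=1,A=0] − E[Y|Z=0,A=0] = β·(E[X|Z=1,A=0] − E[X|Z=0,A=0])`,
where `E[W|B] = E[W·1_B]/ℙ(B)`. -/
theorem bias_formula_negative_control {Ω : Type*} [mΩ : MeasurableSpace Ω]
    [StandardBorelSpace Ω] [Nonempty Ω]
    (μ : Measure Ω) [IsProbabilityMeasure μ]
    (X : Ω → ℝ) (A Z : Ω → ℝ) (Y Y₀ : Ω → ℝ)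
    (hX : Measurable X) (hA : Measurable A) (hZ : Measurable Z)
    (hY : Measurable Y) (hY₀ : Measurable Y₀)
    (hXint : Integrable X μ) (hYint : Integrable Y μ) (hY₀int : Integrable Y₀ μ)
    (hAbin : ∀ ω, A ω = 0 ∨ A ω = 1) (hZbin : ∀ ω, Z ω = 0 ∨ Z ω = 1)
    (hZ1A0 : 0 < μ {ω | Z ω = 1 ∧ A ω = 0}) (hZ0A0 : 0 < μ {ω | Z ω = 0 ∧ A ω = 0})
    (hcons : ∀ᵐ ω ∂μ, A ω = 0 → Y ω = Y₀ ω)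
    (hPE : CondIndepFun (MeasurableSpace.comap X inferInstance) hX.comap_le Y₀ A μ)
    (α β : ℝ)
    (hlin : μ[Y₀ | MeasurableSpace.comap X inferInstance] =ᵐ[μ] fun ω => α + β * X ω)
    (hNC : CondIndepFun (MeasurableSpace.comap X inferInstance) hX.comap_le Y₀ Z
      (μ[|{ω | A ω = 0}])) :
    (∫ ω in {ω | Z ω = 1 ∧ A ω = 0}, Y ω ∂μ) / (μ {ω | Z ω = 1 ∧ A ω = 0}).toReal
      - (∫ ω in {ω | Z ω = 0 ∧ A ω = 0}, Y ω ∂μ) / (μ {ω | Z ω = 0 ∧ A ω = 0}).toReal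
    = β * ((∫ ω in {ω | Z ω = 1 ∧ A ω = 0}, X ω ∂μ) / (μ {ω | Z ω = 1 ∧ A ω = 0}).toReal
      - (∫ ω in {ω | Z ω = 0 ∧ A ω = 0}, X ω ∂μ) / (μ {ω | Z ω = 0 ∧ A ω = 0}).toReal) :=
  bias_formula_negative_control_general (mΩ := mΩ) μ X A Z Y Y₀ hX hA hZ hY₀ hXint hY₀int hZ1A0
    hZ0A0 hcons hPE α β hlin hNC
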